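/- Let r : ℝ^n × ℝ^n → [0,∞) be continuous with r(q,p) > 0 whenever p ≠ 0 and r(q, c·p) = c · r(q,p) for all c ≥ 0, and set Ω = {(q,p) : r(q,p) ≤ 1}. Let H : ℝ/ℤ × ℝ^n × ℝ^n → ℝ be continuous and satisfy H(t, q, e^s p) = e^s H(t, q, p) for all s ≥ 0 whenever r(q,p) ≥ 1. Let b : ℝ/ℤ → ℝ^n be a C¹ loop, and for a continuous loop p : ℝ/ℤ → ℝ^n define the action 𝒜(b,p) = ∫₀¹ H(t, b(t), p(t)) dt − ∫₀¹ ⟨p(t), b'(t)⟩ dt. Assume H is sufficiently negative for b and Ω, meaning: every continuous p : ℝ/ℤ → ℝ^n with r(b(t), p(t)) > 1 for all t satisfies 𝒜(b,p) ≤ 0. Then the supremum S = sup{ 𝒜(b, p̃) : p̃ : ℝ/ℤ → ℝ^n continuous with r(b(t), p̃(t)) ≤ 1 for all t } is finite, and every continuous p : ℝ/ℤ → ℝ^n satisfies 𝒜(b,p) ≤ S. -/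

import Mathlib

/-!
Write `h(t, v) = H(t, b(t), v) - ⟪v, b'(t)⟫` for the action density. The sufficiently negative
condition forces `h(t, v) ≤ 0` whenever `r(b(t), v) = 1`. Otherwise transport `v` to a loop `w`
on `∂Ω` over `b`; then `t ↦ h(t, w t)` is positive near the chosen time, and by
1-homogeneity the lift `(2 + K h⁺) • w`, which lies outside `Ω`, has action
`2 ∫ h + K ∫ h⁺ h > 0` for large `K`.

Hence the radial retraction `p ↦ p / max(r, 1)` onto `Ω` does not decrease the action: where it
moves `p`, it divides a nonpositive density by `r > 1`. Actions of lifts in `Ω` are bounded above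
because `Ω` is compact over the compact image of `b`.
-/

open MeasureTheory Set
open scoped RealInnerProductSpace

/-- The Hamiltonian action `𝒜(b,p) = ∫₀¹ H(t,b(t),p(t)) dt − ∫₀¹ ⟨p(t), b'(t)⟩ dt`
of the lift `γ(t) = (b(t), p(t))` of the base loop `b`, in the trivialized
cotangent bundle `T*ℝⁿ = ℝⁿ × ℝⁿ` with Liouville form `λ = Σ pᵢ dqᵢ`. -/
noncomputable def liftAction {n : ℕ}
    (H : ℝ → EuclideanSpace ℝ (Fin n) → EuclideanSpace ℝ (Fin n) → ℝ)
    (b p : ℝ → EuclideanSpace ℝ (Fin n)) : ℝ :=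
  (∫ t in (0:ℝ)..1, H t (b t) (p t)) - ∫ t in (0:ℝ)..1, ⟪p t, deriv b t⟫

open Function

theorem Function.Periodic.deriv {𝕜 F : Type*} [NontriviallyNormedField 𝕜] [NormedAddCommGroup F]
    [NormedSpace 𝕜 F] {f : 𝕜 → F} {T : 𝕜} (hf : Periodic f T) : Periodic (deriv f) T := fun x => by
  rw [← deriv_comp_add_const, funext hf]

theorem Function.Periodic.intervalIntegral_pos {f : ℝ → ℝ} {T : ℝ} (hf : Periodic f T)
    (hT : 0 < T) (hcont : Continuous f) (hnonneg : ∀ t, 0 ≤ f t) {t₀ : ℝ} (ht₀ : 0 < f t₀) :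
    0 < ∫ t in (0 : ℝ)..T, f t := by
  have hshift := hf.intervalIntegral_add_eq 0 (t₀ - T / 2)
  rw [zero_add] at hshift
  rw [hshift, intervalIntegral.integral_pos_iff_support_of_nonneg_ae
    (Filter.Eventually.of_forall hnonneg) (hcont.intervalIntegrable _ _)]
  refine ⟨by linarith, ?_⟩
  have hopen : IsOpen (support f ∩ Ioo (t₀ - T / 2) (t₀ - T / 2 + T)) :=
    hcont.isOpen_support.inter isOpen_Ioo
  exact (hopen.measure_pos volume ⟨t₀, ht₀.ne', by constructor <;> linarith⟩).trans_le
    (measure_mono (inter_subset_inter_right _ Ioo_subset_Ioc_self))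

theorem exists_periodic_weight_integral_mul_pos {h : ℝ → ℝ} {T : ℝ} (hT : 0 < T)
    (hh : Continuous h) (hper : Periodic h T) {t₀ : ℝ} (ht₀ : 0 < h t₀) (m : ℝ) :
    ∃ c : ℝ → ℝ, Continuous c ∧ Periodic c T ∧ (∀ t, m ≤ c t) ∧
      0 < ∫ t in (0 : ℝ)..T, c t * h t := by
  set hplus : ℝ → ℝ := fun t => max (h t) 0
  have hplus_cont : Continuous hplus := hh.max continuous_const
  have hB : 0 < ∫ t in (0 : ℝ)..T, hplus t * h t := by
    refine Periodic.intervalIntegral_pos (fun t => by simp only [hplus, hper t]) hT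
      (hplus_cont.mul hh) (fun t => ?_) (t₀ := t₀) (by simp [hplus, ht₀])
    rcases le_total 0 (h t) with h0 | h0 <;> simp [hplus, h0, mul_self_nonneg]
  set A := ∫ t in (0 : ℝ)..T, h t
  set K := (|m * A| + 1) / ∫ t in (0 : ℝ)..T, hplus t * h t
  refine ⟨fun t => m + K * hplus t, continuous_const.add (continuous_const.mul hplus_cont),
    fun t => by simp only [hplus, hper t],
    fun t => le_add_of_nonneg_right (mul_nonneg (by positivity) (le_max_right _ _)), ?_⟩
  have hsplit : ∫ t in (0 : ℝ)..T, (m + K * hplus t) * h t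
      = m * A + K * ∫ t in (0 : ℝ)..T, hplus t * h t := by
    simp_rw [add_mul, mul_assoc]
    rw [intervalIntegral.integral_add (f := fun t => m * h t) (g := fun t => K * (hplus t * h t))
      ((hh.intervalIntegrable _ _).const_mul _)
      (((hplus_cont.mul hh).intervalIntegrable _ _).const_mul _),
      intervalIntegral.integral_const_mul, intervalIntegral.integral_const_mul]
  rw [hsplit, div_mul_cancel₀ _ hB.ne']
  linarith [neg_abs_le (m * A)]

theorem IsCompact.exists_norm_le_mul_of_homogeneous {X E : Type*} [TopologicalSpace X]
    [NormedAddCommGroup E] [NormedSpace ℝ E] [ProperSpace E] {r : X → E → ℝ}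
    (hrcont : Continuous fun z : X × E => r z.1 z.2) (hrpos : ∀ q v, v ≠ 0 → 0 < r q v)
    (hrhom : ∀ q v, ∀ c : ℝ, 0 ≤ c → r q (c • v) = c * r q v) {K : Set X} (hK : IsCompact K) :
    ∃ C, 0 ≤ C ∧ ∀ q ∈ K, ∀ v, ‖v‖ ≤ C * r q v := by
  have hsphere : ∀ u ∈ Metric.sphere (0 : E) 1, u ≠ 0 := fun u hu =>
    ne_zero_of_mem_unit_sphere ⟨u, hu⟩
  obtain ⟨C, hC⟩ := (hK.prod (isCompact_sphere (0 : E) 1)).exists_bound_of_continuousOn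
    (f := fun z : X × E => (r z.1 z.2)⁻¹)
    (hrcont.continuousOn.inv₀ fun z hz => (hrpos _ _ (hsphere _ hz.2)).ne')
  refine ⟨max C 0, le_max_right _ _, fun q hq v => ?_⟩
  rcases eq_or_ne v 0 with rfl | hv
  · have hr0 : r q 0 = 0 := by simpa using hrhom q 0 0 le_rfl
    simp [hr0]
  set u := ‖v‖⁻¹ • v
  have hu : u ∈ Metric.sphere (0 : E) 1 := by simp [u, norm_smul, hv]
  have hru : 0 < r q u := hrpos _ _ (hsphere u hu)
  have hrv : r q v = ‖v‖ * r q u := by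
    rw [← hrhom _ _ _ (norm_nonneg v), smul_inv_smul₀ (norm_ne_zero_iff.mpr hv)]
  have hCu : (r q u)⁻¹ ≤ C := by simpa [abs_of_pos hru] using hC (q, u) ⟨hq, hu⟩
  calc ‖v‖ = r q v * (r q u)⁻¹ := by rw [hrv, mul_inv_cancel_right₀ hru.ne']
    _ ≤ r q v * max C 0 :=
      mul_le_mul_of_nonneg_left (hCu.trans (le_max_left _ _)) (by rw [hrv]; positivity)
    _ = max C 0 * r q v := mul_comm _ _

section ActionDensity

variable {E : Type*} [NormedAddCommGroup E] [InnerProductSpace ℝ E] {H : ℝ → E → E → ℝ}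
  {b : ℝ → E}

noncomputable def actionDensity (H : ℝ → E → E → ℝ) (b : ℝ → E) (t : ℝ) (v : E) : ℝ :=
  H t (b t) v - ⟪v, deriv b t⟫

theorem continuous_actionDensity
    (hHcont : Continuous fun z : ℝ × E × E => H z.1 z.2.1 z.2.2) (hb : ContDiff ℝ 1 b) :
    Continuous fun z : ℝ × E => actionDensity H b z.1 z.2 :=
  (hHcont.comp (continuous_fst.prodMk ((hb.continuous.comp continuous_fst).prodMk
    continuous_snd))).sub (continuous_snd.inner ((hb.continuous_deriv le_rfl).comp continuous_fst))

theorem Continuous.actionDensity {p : ℝ → E} (hp : Continuous p)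
    (hHcont : Continuous fun z : ℝ × E × E => H z.1 z.2.1 z.2.2) (hb : ContDiff ℝ 1 b) :
    Continuous fun t => actionDensity H b t (p t) :=
  (continuous_actionDensity hHcont hb).comp (continuous_id.prodMk hp)

theorem Function.Periodic.actionDensity {p : ℝ → E} (hpper : Periodic p 1)
    (hHper : ∀ q v, Periodic (fun t => H t q v) 1) (hbper : Periodic b 1) :
    Periodic (fun t => actionDensity H b t (p t)) 1 := fun t => by
  simp only [_root_.actionDensity, hbper t, hpper t, hbper.deriv t, hHper (b t) (p t) t]

theorem actionDensity_smul {r : E → E → ℝ}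
    (hHhom : ∀ t q v, ∀ s : ℝ, 0 ≤ s → 1 ≤ r q v → H t q (Real.exp s • v) = Real.exp s * H t q v)
    {t : ℝ} {v : E} (hv : 1 ≤ r (b t) v) {c : ℝ} (hc : 1 ≤ c) :
    actionDensity H b t (c • v) = c * actionDensity H b t v := by
  have hH := hHhom t (b t) v (Real.log c) (Real.log_nonneg hc) hv
  rw [Real.exp_log (by linarith)] at hH
  rw [actionDensity, actionDensity, hH, real_inner_smul_left, mul_sub]

end ActionDensity

section LiftAction

variable {n : ℕ} {r : EuclideanSpace ℝ (Fin n) → EuclideanSpace ℝ (Fin n) → ℝ}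
  {H : ℝ → EuclideanSpace ℝ (Fin n) → EuclideanSpace ℝ (Fin n) → ℝ}
  {b : ℝ → EuclideanSpace ℝ (Fin n)}

theorem liftAction_eq_integral_actionDensity
    (hHcont : Continuous fun z : ℝ × EuclideanSpace ℝ (Fin n) × EuclideanSpace ℝ (Fin n) =>
      H z.1 z.2.1 z.2.2)
    (hb : ContDiff ℝ 1 b) {p : ℝ → EuclideanSpace ℝ (Fin n)} (hp : Continuous p) :
    liftAction H b p = ∫ t in (0 : ℝ)..1, actionDensity H b t (p t) :=
  (intervalIntegral.integral_sub
    ((hHcont.comp (continuous_id.prodMk (hb.continuous.prodMk hp))).intervalIntegrable _ _)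
    ((hp.inner (hb.continuous_deriv le_rfl)).intervalIntegrable _ _)).symm

theorem liftAction_le_liftAction
    (hHcont : Continuous fun z : ℝ × EuclideanSpace ℝ (Fin n) × EuclideanSpace ℝ (Fin n) =>
      H z.1 z.2.1 z.2.2)
    (hb : ContDiff ℝ 1 b) {p p' : ℝ → EuclideanSpace ℝ (Fin n)} (hp : Continuous p)
    (hp' : Continuous p') (hle : ∀ t, actionDensity H b t (p t) ≤ actionDensity H b t (p' t)) :
    liftAction H b p ≤ liftAction H b p' := by
  rw [liftAction_eq_integral_actionDensity hHcont hb hp,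
    liftAction_eq_integral_actionDensity hHcont hb hp']
  exact intervalIntegral.integral_mono_on zero_le_one
    ((hp.actionDensity hHcont hb).intervalIntegrable _ _)
    ((hp'.actionDensity hHcont hb).intervalIntegrable _ _) fun t _ => hle t

theorem bddAbove_liftAction_of_le_one
    (hrcont : Continuous fun z : EuclideanSpace ℝ (Fin n) × EuclideanSpace ℝ (Fin n) => r z.1 z.2)
    (hrpos : ∀ q p, p ≠ 0 → 0 < r q p) (hrhom : ∀ q p, ∀ c : ℝ, 0 ≤ c → r q (c • p) = c * r q p)
    (hHcont : Continuous fun z : ℝ × EuclideanSpace ℝ (Fin n) × EuclideanSpace ℝ (Fin n) =>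
      H z.1 z.2.1 z.2.2)
    (hb : ContDiff ℝ 1 b) :
    BddAbove {x : ℝ | ∃ p : ℝ → EuclideanSpace ℝ (Fin n),
      Continuous p ∧ Periodic p 1 ∧ (∀ t, r (b t) (p t) ≤ 1) ∧ x = liftAction H b p} := by
  have hI : IsCompact (Icc (0 : ℝ) 1) := isCompact_Icc
  obtain ⟨R, hR0, hR⟩ :=
    (hI.image hb.continuous).exists_norm_le_mul_of_homogeneous hrcont hrpos hrhom
  obtain ⟨C, hC⟩ := ((hI.prod (isCompact_closedBall 0 R)).image
    (continuous_actionDensity hHcont hb)).bddAbove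
  refine ⟨C, ?_⟩
  rintro _ ⟨p, hp, -, hpΩ, rfl⟩
  have hbound : ∀ t ∈ Icc (0 : ℝ) 1, actionDensity H b t (p t) ≤ C := fun t ht => by
    refine hC ⟨(t, p t), ⟨ht, ?_⟩, rfl⟩
    rw [Metric.mem_closedBall, dist_zero_right]
    calc ‖p t‖ ≤ R * r (b t) (p t) := hR _ (mem_image_of_mem b ht) _
      _ ≤ R * 1 := by gcongr; exact hpΩ t
      _ = R := mul_one R
  rw [liftAction_eq_integral_actionDensity hHcont hb hp]
  simpa using intervalIntegral.integral_mono_on (μ := volume) zero_le_one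
    ((hp.actionDensity hHcont hb).intervalIntegrable _ _) intervalIntegrable_const hbound

theorem liftAction_smul_eq_integral
    (hHcont : Continuous fun z : ℝ × EuclideanSpace ℝ (Fin n) × EuclideanSpace ℝ (Fin n) =>
      H z.1 z.2.1 z.2.2)
    (hHhom : ∀ t q p, ∀ s : ℝ, 0 ≤ s → 1 ≤ r q p →
      H t q (Real.exp s • p) = Real.exp s * H t q p)
    (hb : ContDiff ℝ 1 b) {c : ℝ → ℝ} {w : ℝ → EuclideanSpace ℝ (Fin n)} (hc : Continuous c)
    (hw : Continuous w) (hc1 : ∀ t, 1 ≤ c t) (hw1 : ∀ t, 1 ≤ r (b t) (w t)) :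
    liftAction H b (fun t => c t • w t) = ∫ t in (0 : ℝ)..1, c t * actionDensity H b t (w t) := by
  rw [liftAction_eq_integral_actionDensity hHcont hb (p := fun t => c t • w t) (hc.smul hw)]
  exact intervalIntegral.integral_congr fun t _ => actionDensity_smul hHhom (hw1 t) (hc1 t)

theorem actionDensity_nonpos_on_boundary
    (hrcont : Continuous fun z : EuclideanSpace ℝ (Fin n) × EuclideanSpace ℝ (Fin n) => r z.1 z.2)
    (hrpos : ∀ q p, p ≠ 0 → 0 < r q p) (hrhom : ∀ q p, ∀ c : ℝ, 0 ≤ c → r q (c • p) = c * r q p)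
    (hHcont : Continuous fun z : ℝ × EuclideanSpace ℝ (Fin n) × EuclideanSpace ℝ (Fin n) =>
      H z.1 z.2.1 z.2.2)
    (hHper : ∀ q p, Periodic (fun t => H t q p) 1)
    (hHhom : ∀ t q p, ∀ s : ℝ, 0 ≤ s → 1 ≤ r q p →
      H t q (Real.exp s • p) = Real.exp s * H t q p)
    (hb : ContDiff ℝ 1 b) (hbper : Periodic b 1)
    (hneg : ∀ p : ℝ → EuclideanSpace ℝ (Fin n), Continuous p → Periodic p 1 →
      (∀ t, 1 < r (b t) (p t)) → liftAction H b p ≤ 0)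
    {t₀ : ℝ} {v : EuclideanSpace ℝ (Fin n)} (hv : r (b t₀) v = 1) :
    actionDensity H b t₀ v ≤ 0 := by
  by_contra! hpos
  have hv0 : v ≠ 0 := by
    rintro rfl
    simpa [hv] using hrhom (b t₀) 0 0 le_rfl
  have hrv : ∀ t, 0 < r (b t) v := fun t => hrpos _ _ hv0
  set w : ℝ → EuclideanSpace ℝ (Fin n) := fun t => (r (b t) v)⁻¹ • v
  have hw : Continuous w := ((hrcont.comp (hb.continuous.prodMk continuous_const)).inv₀
    fun t => (hrv t).ne').smul continuous_const
  have hwper : Periodic w 1 := fun t => by simp only [w, hbper t]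
  have hrw : ∀ t, r (b t) (w t) = 1 := fun t => by
    rw [hrhom _ _ _ (inv_nonneg.2 (hrv t).le), inv_mul_cancel₀ (hrv t).ne']
  have hwt₀ : w t₀ = v := by simp [w, hv]
  obtain ⟨c, hc, hcper, hc2, hcpos⟩ := exists_periodic_weight_integral_mul_pos one_pos
    (hw.actionDensity hHcont hb) (hwper.actionDensity hHper hbper) (t₀ := t₀)
    (by rwa [hwt₀]) 2
  have hc1 : ∀ t, 1 ≤ c t := fun t => by linarith [hc2 t]
  have hP := hneg (fun t => c t • w t) (hc.smul hw) (fun t => by simp only [hcper t, hwper t])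
    fun t => by rw [hrhom _ _ _ (by linarith [hc2 t]), hrw t]; linarith [hc2 t]
  rw [liftAction_smul_eq_integral hHcont hHhom hb hc hw hc1 fun t => (hrw t).ge] at hP
  linarith

theorem actionDensity_le_actionDensity_inv_max_smul
    (hrhom : ∀ q p, ∀ c : ℝ, 0 ≤ c → r q (c • p) = c * r q p)
    (hHhom : ∀ t q p, ∀ s : ℝ, 0 ≤ s → 1 ≤ r q p →
      H t q (Real.exp s • p) = Real.exp s * H t q p)
    {t : ℝ} (hkey : ∀ u, r (b t) u = 1 → actionDensity H b t u ≤ 0)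
    (v : EuclideanSpace ℝ (Fin n)) :
    actionDensity H b t v ≤ actionDensity H b t ((max (r (b t) v) 1)⁻¹ • v) := by
  rcases le_or_gt (r (b t) v) 1 with hle | hgt
  · rw [max_eq_right hle, inv_one, one_smul]
  set ρ := r (b t) v
  have hρ0 : ρ ≠ 0 := by positivity
  have hru : r (b t) (ρ⁻¹ • v) = 1 := by
    rw [hrhom _ _ _ (by positivity), inv_mul_cancel₀ hρ0]
  rw [max_eq_left hgt.le]
  calc actionDensity H b t v = actionDensity H b t (ρ • ρ⁻¹ • v) := by rw [smul_inv_smul₀ hρ0]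
    _ = ρ * actionDensity H b t (ρ⁻¹ • v) := actionDensity_smul hHhom hru.ge hgt.le
    _ ≤ actionDensity H b t (ρ⁻¹ • v) := by nlinarith [hkey _ hru]

theorem exists_le_one_liftAction_le
    (hrcont : Continuous fun z : EuclideanSpace ℝ (Fin n) × EuclideanSpace ℝ (Fin n) => r z.1 z.2)
    (hrhom : ∀ q p, ∀ c : ℝ, 0 ≤ c → r q (c • p) = c * r q p)
    (hHcont : Continuous fun z : ℝ × EuclideanSpace ℝ (Fin n) × EuclideanSpace ℝ (Fin n) =>
      H z.1 z.2.1 z.2.2)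
    (hHhom : ∀ t q p, ∀ s : ℝ, 0 ≤ s → 1 ≤ r q p →
      H t q (Real.exp s • p) = Real.exp s * H t q p)
    (hb : ContDiff ℝ 1 b) (hbper : Periodic b 1)
    (hkey : ∀ t u, r (b t) u = 1 → actionDensity H b t u ≤ 0)
    {p : ℝ → EuclideanSpace ℝ (Fin n)} (hp : Continuous p) (hpper : Periodic p 1) :
    ∃ p' : ℝ → EuclideanSpace ℝ (Fin n), Continuous p' ∧ Periodic p' 1 ∧
      (∀ t, r (b t) (p' t) ≤ 1) ∧ liftAction H b p ≤ liftAction H b p' := by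
  have hm : Continuous fun t => max (r (b t) (p t)) 1 :=
    (hrcont.comp (hb.continuous.prodMk hp)).max continuous_const
  have hp' : Continuous fun t => (max (r (b t) (p t)) 1)⁻¹ • p t :=
    (hm.inv₀ fun t => by positivity).smul hp
  refine ⟨_, hp', fun t => by simp only [hbper t, hpper t], fun t => ?_,
    liftAction_le_liftAction hHcont hb hp hp' fun t =>
      actionDensity_le_actionDensity_inv_max_smul hrhom hHhom (hkey t) (p t)⟩
  rw [hrhom _ _ _ (by positivity), inv_mul_le_iff₀ (by positivity), mul_one]
  exact le_max_left _ _

end LiftAction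

theorem stmt_13_general (n : ℕ)
    (r : EuclideanSpace ℝ (Fin n) → EuclideanSpace ℝ (Fin n) → ℝ)
    (hrcont : Continuous (fun z : EuclideanSpace ℝ (Fin n) × EuclideanSpace ℝ (Fin n) => r z.1 z.2))
    (hrpos : ∀ q p, p ≠ 0 → 0 < r q p)
    (hrhom : ∀ q p, ∀ c : ℝ, 0 ≤ c → r q (c • p) = c * r q p)
    (H : ℝ → EuclideanSpace ℝ (Fin n) → EuclideanSpace ℝ (Fin n) → ℝ)
    (hHcont : Continuous (fun z : ℝ × EuclideanSpace ℝ (Fin n) × EuclideanSpace ℝ (Fin n) =>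
      H z.1 z.2.1 z.2.2))
    (hHper : ∀ q p, Function.Periodic (fun t => H t q p) 1)
    (hHhom : ∀ t q p, ∀ s : ℝ, 0 ≤ s → 1 ≤ r q p →
      H t q (Real.exp s • p) = Real.exp s * H t q p)
    (b : ℝ → EuclideanSpace ℝ (Fin n))
    (hb : ContDiff ℝ 1 b) (hbper : Function.Periodic b 1)
    -- `H` is sufficiently negative for `b` and `Ω`
    (hneg : ∀ p : ℝ → EuclideanSpace ℝ (Fin n), Continuous p → Function.Periodic p 1 →
      (∀ t, 1 < r (b t) (p t)) → liftAction H b p ≤ 0) :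
    BddAbove {x : ℝ | ∃ p : ℝ → EuclideanSpace ℝ (Fin n),
        Continuous p ∧ Function.Periodic p 1 ∧ (∀ t, r (b t) (p t) ≤ 1) ∧
        x = liftAction H b p} ∧
    ∀ p : ℝ → EuclideanSpace ℝ (Fin n), Continuous p → Function.Periodic p 1 →
      liftAction H b p ≤
        sSup {x : ℝ | ∃ p' : ℝ → EuclideanSpace ℝ (Fin n),
          Continuous p' ∧ Function.Periodic p' 1 ∧ (∀ t, r (b t) (p' t) ≤ 1) ∧
          x = liftAction H b p'} := by
  have hkey : ∀ t u, r (b t) u = 1 → actionDensity H b t u ≤ 0 := fun t u hu =>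
    actionDensity_nonpos_on_boundary hrcont hrpos hrhom hHcont hHper hHhom hb hbper hneg hu
  have hbdd := bddAbove_liftAction_of_le_one hrcont hrpos hrhom hHcont hb
  refine ⟨hbdd, fun p hp hpper => ?_⟩
  obtain ⟨p', hp', hp'per, hp'Ω, hle⟩ :=
    exists_le_one_liftAction_le hrcont hrhom hHcont hHhom hb hbper hkey hp hpper
  exact hle.trans (le_csSup hbdd ⟨p', hp', hp'per, hp'Ω, rfl⟩)

/-- Proposition 3.1 of the paper: if `H` is sufficiently negative for the base
loop `b` and the fiberwise star-shaped domain `Ω = {r ≤ 1}`, then the actions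
of lifts of `b` contained in `Ω` are bounded above, and the action of every
lift of `b` is bounded by their supremum. -/
theorem stmt_13 (n : ℕ)
    (r : EuclideanSpace ℝ (Fin n) → EuclideanSpace ℝ (Fin n) → ℝ)
    (hrcont : Continuous (fun z : EuclideanSpace ℝ (Fin n) × EuclideanSpace ℝ (Fin n) => r z.1 z.2))
    (hrnonneg : ∀ q p, 0 ≤ r q p)
    (hrpos : ∀ q p, p ≠ 0 → 0 < r q p)
    (hrhom : ∀ q p, ∀ c : ℝ, 0 ≤ c → r q (c • p) = c * r q p)
    (H : ℝ → EuclideanSpace ℝ (Fin n) → EuclideanSpace ℝ (Fin n) → ℝ)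
    (hHcont : Continuous (fun z : ℝ × EuclideanSpace ℝ (Fin n) × EuclideanSpace ℝ (Fin n) =>
      H z.1 z.2.1 z.2.2))
    (hHper : ∀ q p, Function.Periodic (fun t => H t q p) 1)
    (hHhom : ∀ t q p, ∀ s : ℝ, 0 ≤ s → 1 ≤ r q p →
      H t q (Real.exp s • p) = Real.exp s * H t q p)
    (b : ℝ → EuclideanSpace ℝ (Fin n))
    (hb : ContDiff ℝ 1 b) (hbper : Function.Periodic b 1)
    -- `H` is sufficiently negative for `b` and `Ω`
    (hneg : ∀ p : ℝ → EuclideanSpace ℝ (Fin n), Continuous p → Function.Periodic p 1 →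
      (∀ t, 1 < r (b t) (p t)) → liftAction H b p ≤ 0) :
    BddAbove {x : ℝ | ∃ p : ℝ → EuclideanSpace ℝ (Fin n),
        Continuous p ∧ Function.Periodic p 1 ∧ (∀ t, r (b t) (p t) ≤ 1) ∧
        x = liftAction H b p} ∧
    ∀ p : ℝ → EuclideanSpace ℝ (Fin n), Continuous p → Function.Periodic p 1 →
      liftAction H b p ≤
        sSup {x : ℝ | ∃ p' : ℝ → EuclideanSpace ℝ (Fin n),
          Continuous p' ∧ Function.Periodic p' 1 ∧ (∀ t, r (b t) (p' t) ≤ 1) ∧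
          x = liftAction H b p'} :=
  stmt_13_general n r hrcont hrpos hrhom H hHcont hHper hHhom b hb hbper hneg
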